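/- arXiv:2209.09843 — 9 statements merged into one kernel-verified Lean document; each statement's English description precedes it below -/
import Mathlib

section
/- If Q(x) is a polynomial with nonnegative real coefficients, and both P(x) and R(x) = P(x)Q(x) are 0-1-polynomials (all coefficients in {0,1}) with P monic and P(0)=1, R(0)=1, then Q(x) is a 0-1-polynomial as well. -/
open Polynomial

lemma sum01_aux (s : Finset ℕ) (f : ℕ → ℝ) (h : ∀ i ∈ s, f i = 0 ∨ f i = 1) :
    (∑ i ∈ s, f i) = 0 ∨ 1 ≤ ∑ i ∈ s, f i := by
  classical
  induction s using Finset.induction with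
  | empty => simp
  | @insert a s hx ih =>
    rw [Finset.sum_insert hx]
    rcases h a (Finset.mem_insert_self a s) with h0 | h1
    · rcases ih (fun i hi => h i (Finset.mem_insert_of_mem hi)) with hs | hs
      · left; rw [h0, hs]; ring
      · right; rw [h0]; linarith
    · right
      rcases ih (fun i hi => h i (Finset.mem_insert_of_mem hi)) with hs | hs
      · rw [h1, hs]; norm_num
      · rw [h1]; linarith

theorem stmt_1 (P Q : Polynomial ℝ)
    (hQ : ∀ n, 0 ≤ Q.coeff n)
    (hP01 : ∀ n, P.coeff n = 0 ∨ P.coeff n = 1)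
    (hR01 : ∀ n, (P * Q).coeff n = 0 ∨ (P * Q).coeff n = 1)
    (hPmonic : P.Monic)
    (hP0 : P.coeff 0 = 1)
    (hR0 : (P * Q).coeff 0 = 1) :
    ∀ n, Q.coeff n = 0 ∨ Q.coeff n = 1 := by
  intro n
  induction n using Nat.strong_induction_on with
  | _ n ih =>
    rcases Nat.eq_zero_or_pos n with hn | hn
    · subst hn
      right
      have h := hR0
      rw [mul_coeff_zero, hP0, one_mul] at h
      exact h
    · have key : (P * Q).coeff n
          = Q.coeff n + ∑ i ∈ Finset.range n, P.coeff (i+1) * Q.coeff (n - (i+1)) := by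
        rw [coeff_mul, Finset.Nat.sum_antidiagonal_eq_sum_range_succ_mk,
          Finset.sum_range_succ']
        simp [hP0, add_comm]
      have hterm : ∀ i ∈ Finset.range n,
          P.coeff (i+1) * Q.coeff (n - (i+1)) = 0 ∨ P.coeff (i+1) * Q.coeff (n - (i+1)) = 1 := by
        intro i hi
        have hi' : i < n := Finset.mem_range.mp hi
        rcases hP01 (i+1) with h | h
        · left; rw [h, zero_mul]
        · rcases ih (n - (i+1)) (by omega) with h' | h'
          · left; rw [h', mul_zero]
          · right; rw [h, h', mul_one]
      rcases sum01_aux _ _ hterm with hS | hS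
      · rw [hS, add_zero] at key
        rcases hR01 n with h | h <;> [left; right] <;> rw [← key, h]
      · have hQn := hQ n
        rcases hR01 n with h | h
        · rw [h] at key; linarith
        · rw [h] at key; left; linarith
end

section
/- Suppose (x^5 + a x^2 + 1)·Q(x) = R(x) where 0 < a < 1, Q(x) = Σ b_k x^k has nonnegative real coefficients, R(x) = Σ c_k x^k has all coefficients in {0,1}, and b_0 = c_0 = 1. Then c_1 = c_3 = 0, c_2 = c_4 = c_5 = 1, b_1 = b_3 = b_5 = 0, b_2 = 1 − a, and b_4 = 1 − a + a^2. -/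
theorem stmt_2 (a : ℝ) (ha0 : 0 < a) (ha1 : a < 1)
    (b c : ℤ → ℝ)
    (hbneg : ∀ n < 0, b n = 0)
    (hbnonneg : ∀ n, 0 ≤ b n)
    (hc01 : ∀ n, c n = 0 ∨ c n = 1)
    (hb0 : b 0 = 1) (hc0 : c 0 = 1)
    (hrel : ∀ n, c n = b n + a * b (n - 2) + b (n - 5)) :
    c 1 = 0 ∧ c 3 = 0 ∧ c 2 = 1 ∧ c 4 = 1 ∧ c 5 = 1 ∧
    b 1 = 0 ∧ b 3 = 0 ∧ b 5 = 0 ∧ b 2 = 1 - a ∧ b 4 = 1 - a + a ^ 2 := by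
  have h1 := hrel 1
  have h2 := hrel 2
  have h3 := hrel 3
  have h4 := hrel 4
  have h5 := hrel 5
  norm_num [hbneg (-1) (by norm_num), hbneg (-4) (by norm_num),
    hbneg (-3) (by norm_num), hbneg (-2) (by norm_num), hb0] at h1 h2 h3 h4 h5
  -- c2 = 1
  have hc2 : c 2 = 1 := by
    rcases hc01 2 with h | h
    · exfalso; have := hbnonneg 2; nlinarith
    · exact h
  have hb2 : b 2 = 1 - a := by rw [hc2] at h2; linarith
  have hc4 : c 4 = 1 := by
    rcases hc01 4 with h | h
    · exfalso; have := hbnonneg 4; nlinarith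
    · exact h
  have hb4 : b 4 = 1 - a + a ^ 2 := by rw [hc4, hb2] at h4; nlinarith
  have hc5 : c 5 = 1 := by
    rcases hc01 5 with h | h
    · exfalso; have h3' := hbnonneg 3; have h5' := hbnonneg 5; nlinarith
    · exact h
  have hsum : b 5 + a * b 3 = 0 := by rw [hc5] at h5; linarith
  have hb3 : b 3 = 0 := by
    have h3' := hbnonneg 3; have h5' := hbnonneg 5; nlinarith
  have hb5 : b 5 = 0 := by
    have h3' := hbnonneg 3; have h5' := hbnonneg 5; nlinarith
  have hb1 : b 1 = 0 := by
    rcases hc01 1 with h | h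
    · linarith [h1, h.symm.trans h1]
    · exfalso
      have hb1' : b 1 = 1 := by linarith [h.symm.trans h1]
      rcases hc01 3 with h3c | h3c
      · rw [h3c, hb3, hb1'] at h3; nlinarith
      · rw [h3c, hb3, hb1'] at h3; nlinarith
  have hc1 : c 1 = 0 := by rw [h1, hb1]
  have hc3 : c 3 = 0 := by rw [h3, hb3, hb1]; ring
  exact ⟨hc1, hc3, hc2, hc4, hc5, hb1, hb3, hb5, hb2, hb4⟩
end

section
/- Define polynomials B_n(t) ∈ ℤ[t] by B_0 = 1, B_1 = 0, B_2 = 1 − t, B_3 = 0, B_4 = 1 − t + t^2, and B_n(t) = 1 − t·B_{n−2}(t) − B_{n−5}(t) for n ≥ 5. Then for all k ∈ ℕ, B_{2k}(t) has degree k with leading coefficient (−1)^k, and for all k ≥ 3, B_{2k+1}(t) has degree k−2 with leading coefficient (−1)^{k−1}(k−2). -/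
open Polynomial

lemma coeff_aux (p q : Polynomial ℤ) (i : ℕ) :
    (1 - X * p - q).coeff (i + 1) = - p.coeff i - q.coeff (i + 1) := by
  simp [coeff_X_mul, coeff_one]

lemma coeff_aux0 (p q : Polynomial ℤ) :
    (1 - X * p - q).coeff 0 = 1 - q.coeff 0 := by
  simp

theorem stmt_4 (B : ℕ → Polynomial ℤ)
    (h0 : B 0 = 1) (h1 : B 1 = 0) (h2 : B 2 = 1 - X) (h3 : B 3 = 0)
    (h4 : B 4 = 1 - X + X ^ 2)
    (hrec : ∀ n ≥ 5, B n = 1 - X * B (n - 2) - B (n - 5)) :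
    (∀ k : ℕ, (B (2 * k)).degree = k ∧ (B (2 * k)).leadingCoeff = (-1) ^ k) ∧
    (∀ k : ℕ, 3 ≤ k → (B (2 * k + 1)).degree = ((k - 2 : ℕ) : WithBot ℕ) ∧
      (B (2 * k + 1)).leadingCoeff = (-1) ^ (k - 1) * (k - 2 : ℕ)) := by
  have key : ∀ k : ℕ,
      ((B (2 * k)).coeff k = (-1) ^ k ∧ ∀ j : ℕ, k < j → (B (2 * k)).coeff j = 0) ∧
      ((B (2 * k + 1)).coeff (k - 2) = (-1) ^ (k - 1) * ((k - 2 : ℕ) : ℤ) ∧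
        ∀ j : ℕ, (k : ℤ) - 2 < j → (B (2 * k + 1)).coeff j = 0) := by
    intro k
    induction k using Nat.strong_induction_on with
    | _ k ih =>
      constructor
      · -- even part
        match k with
        | 0 =>
          refine ⟨by simp [h0], ?_⟩
          intro j hj
          simp only [h0, coeff_one]
          simp; omega
        | 1 =>
          constructor
          · simp [h2, coeff_one, coeff_X]
          · intro j hj
            rcases Nat.exists_eq_add_of_lt hj with ⟨i, rfl⟩
            simp [h2, coeff_one, coeff_X]
        | 2 =>
          constructor
          · simp [h4, coeff_one, coeff_X]
          · intro j hj
            rcases Nat.exists_eq_add_of_lt hj with ⟨i, rfl⟩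
            simp [h4, coeff_one, coeff_X, coeff_X_pow]
            omega
        | (m + 3) =>
          have hb : B (2 * (m + 3)) = 1 - X * B (2 * (m + 2)) - B (2 * m + 1) := by
            have h := hrec (2 * (m + 3)) (by omega)
            rw [show 2 * (m + 3) - 2 = 2 * (m + 2) from by omega,
              show 2 * (m + 3) - 5 = 2 * m + 1 from by omega] at h
            exact h
          have ihE := (ih (m + 2) (by omega)).1
          have ihO := (ih m (by omega)).2
          constructor
          · rw [hb, show m + 3 = (m + 2) + 1 from rfl, coeff_aux]
            rw [ihE.1, ihO.2 (m + 2 + 1) (by push_cast; omega)]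
            ring
          · intro j hj
            rcases Nat.exists_eq_add_of_lt hj with ⟨i, rfl⟩
            rw [hb, show m + 3 + i + 1 = (m + 3 + i) + 1 from rfl, coeff_aux]
            rw [ihE.2 (m + 3 + i) (by omega), ihO.2 (m + 3 + i + 1) (by push_cast; omega)]
            ring
      · -- odd part
        match k with
        | 0 => constructor <;> simp [h1]
        | 1 => constructor <;> simp [h3]
        | (m + 2) =>
          have hb : B (2 * (m + 2) + 1) = 1 - X * B (2 * (m + 1) + 1) - B (2 * m) := by
            have h := hrec (2 * (m + 2) + 1) (by omega)
            rw [show 2 * (m + 2) + 1 - 2 = 2 * (m + 1) + 1 from by omega,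
              show 2 * (m + 2) + 1 - 5 = 2 * m from by omega] at h
            exact h
          have ihO := (ih (m + 1) (by omega)).2
          have ihE := (ih m (by omega)).1
          constructor
          · rw [show m + 2 - 2 = m from by omega, hb]
            match m with
            | 0 =>
              rw [coeff_aux0, ihE.1]
              simp
            | (i + 1) =>
              rw [coeff_aux]
              have h1' : (B (2 * (i + 1 + 1) + 1)).coeff i = (-1) ^ (i + 1) * (i : ℤ) := by
                have := ihO.1
                rwa [show i + 1 + 1 - 2 = i from by omega,
                  show i + 1 + 1 - 1 = i + 1 from by omega] at this
              rw [h1', ihE.1]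
              push_cast
              ring
          · intro j hj
            have hj1 : 1 ≤ j := by omega
            rcases Nat.exists_eq_add_of_le hj1 with ⟨i, rfl⟩
            rw [hb, show 1 + i = i + 1 from by omega, coeff_aux]
            rw [ihO.2 i (by push_cast at hj ⊢; omega), ihE.2 (i + 1) (by push_cast at hj; omega)]
            ring
  have deg : ∀ (n k : ℕ), (B n).coeff k ≠ 0 → (∀ j : ℕ, k < j → (B n).coeff j = 0) →
      (B n).degree = k ∧ (B n).leadingCoeff = (B n).coeff k := by
    intro n k hne hz
    have hle : (B n).degree ≤ (k : WithBot ℕ) :=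
      (degree_le_iff_coeff_zero _ _).2 fun m hm => hz m (by exact_mod_cast hm)
    have hd : (B n).degree = k := le_antisymm hle (le_degree_of_ne_zero hne)
    refine ⟨hd, ?_⟩
    rw [Polynomial.leadingCoeff, natDegree_eq_of_degree_eq_some hd]
  constructor
  · intro k
    obtain ⟨⟨hc, hz⟩, -⟩ := key k
    have h := deg (2 * k) k (by rw [hc]; exact pow_ne_zero _ (by norm_num)) hz
    exact ⟨h.1, by rw [h.2, hc]⟩
  · intro k hk
    obtain ⟨-, hc, hz⟩ := key k
    have hne : (B (2 * k + 1)).coeff (k - 2) ≠ 0 := by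
      rw [hc]
      have h2' : ((k - 2 : ℕ) : ℤ) ≠ 0 := by
        exact_mod_cast (by omega : k - 2 ≠ 0)
      exact mul_ne_zero (pow_ne_zero _ (by norm_num)) h2'
    have h := deg (2 * k + 1) (k - 2) hne (fun j hj => hz j (by omega))
    exact ⟨h.1, by rw [h.2, hc]⟩
end

section
/- Suppose (x^5 + a x^2 + 1)·Q(x) = R(x) with 0 < a < 1, Q = Σ b_k x^k nonnegative, R = Σ c_k x^k with entries in {0,1}, b_0 = c_0 = 1. If N ∈ ℕ and c_n = 1 for all 4 ≤ n < N, then b_n = B_n(a) for all 0 ≤ n < N, where B_n is the polynomial sequence defined by B_0=1, B_1=0, B_2=1−t, B_3=0, B_4=1−t+t^2, B_n = 1 − t·B_{n−2} − B_{n−5}. -/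
open Polynomial

theorem stmt_6 (a : ℝ) (ha0 : 0 < a) (ha1 : a < 1)
    (b c : ℤ → ℝ)
    (hbneg : ∀ n < 0, b n = 0)
    (hbnonneg : ∀ n, 0 ≤ b n)
    (hc01 : ∀ n, c n = 0 ∨ c n = 1)
    (hb0 : b 0 = 1) (hc0 : c 0 = 1)
    (hrel : ∀ n, c n = b n + a * b (n - 2) + b (n - 5))
    (B : ℕ → Polynomial ℝ)
    (hB0 : B 0 = 1) (hB1 : B 1 = 0) (hB2 : B 2 = 1 - X) (hB3 : B 3 = 0)
    (hB4 : B 4 = 1 - X + X ^ 2)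
    (hBrec : ∀ n ≥ 5, B n = 1 - X * B (n - 2) - B (n - 5))
    (N : ℕ)
    (hcN : ∀ n : ℕ, 4 ≤ n → n < N → c n = 1) :
    ∀ n : ℕ, n < N → b n = (B n).eval a := by
  have hm1 : b (-1) = 0 := hbneg _ (by norm_num)
  have hm2 : b (-2) = 0 := hbneg _ (by norm_num)
  have hm3 : b (-3) = 0 := hbneg _ (by norm_num)
  have hm4 : b (-4) = 0 := hbneg _ (by norm_num)
  -- b 2 = 1 - a
  have hr2 := hrel 2
  norm_num [hm3, hb0] at hr2
  have hb2 : b 2 = 1 - a := by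
    rcases hc01 2 with h | h <;> rw [h] at hr2
    · have := hbnonneg 2; linarith
    · linarith
  -- b 1 = 0
  have hb1 : b 1 = 0 := by
    have hr1 := hrel 1
    norm_num [hm1, hm4] at hr1
    rcases hc01 1 with h | h
    · rw [h] at hr1; linarith
    · exfalso
      rw [h] at hr1
      have hr6 := hrel 6
      norm_num [← hr1] at hr6
      have hb4 : b 4 = 0 := by
        have h6 := hbnonneg 6
        have h4 := hbnonneg 4
        rcases hc01 6 with h' | h' <;> rw [h'] at hr6 <;> nlinarith
      have hr4 := hrel 4
      norm_num [hm1, hb4, hb2] at hr4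
      rcases hc01 4 with h' | h' <;> rw [h'] at hr4 <;> nlinarith
  -- b 3 = 0
  have hb3 : b 3 = 0 := by
    have hr3 := hrel 3
    norm_num [hm2, hb1] at hr3
    rcases hc01 3 with h | h
    · rw [h] at hr3; linarith
    · exfalso
      rw [h] at hr3
      have hr5 := hrel 5
      norm_num [← hr3, hb0] at hr5
      have h5 := hbnonneg 5
      rcases hc01 5 with h' | h' <;> rw [h'] at hr5 <;> nlinarith
  intro n
  induction n using Nat.strong_induction_on with
  | _ n ih =>
    intro hnN
    rcases Nat.lt_or_ge n 5 with h5 | h5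
    · interval_cases n
      · simpa [hB0] using hb0
      · simpa [hB1] using hb1
      · simpa [hB2] using hb2
      · simpa [hB3] using hb3
      · have hc4 : c 4 = 1 := by exact_mod_cast hcN 4 (by norm_num) hnN
        have hr4 := hrel 4
        norm_num [hm1, hb2, hc4] at hr4
        simp only [Nat.cast_ofNat, hB4]
        simp only [eval_add, eval_sub, eval_one, eval_X, eval_pow]
        nlinarith
    · obtain ⟨m, rfl⟩ : ∃ m, n = m + 5 := ⟨n - 5, by omega⟩
      have hc := hcN (m + 5) (by omega) hnN
      have hr := hrel ((m + 5 : ℕ) : ℤ)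
      have e1 : ((m + 5 : ℕ) : ℤ) - 2 = ((m + 3 : ℕ) : ℤ) := by push_cast; ring
      have e2 : ((m + 5 : ℕ) : ℤ) - 5 = ((m : ℕ) : ℤ) := by push_cast; ring
      rw [e1, e2, hc] at hr
      have ih2 := ih (m + 3) (by omega) (by omega)
      have ih5 := ih m (by omega) (by omega)
      have hBn := hBrec (m + 5) (by omega)
      have e3 : m + 5 - 2 = m + 3 := by omega
      have e4 : m + 5 - 5 = m := by omega
      rw [e3, e4] at hBn
      rw [hBn]
      simp only [eval_sub, eval_mul, eval_one, eval_X]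
      rw [← ih2, ← ih5]
      linarith
end

section
/- Let t ≥ 0 and let ρ be a complex root of x^5 + t x^3 + 1. Then ρ ≠ 0 and ρ^5 is not a positive real number; in particular the argument of ρ is not an integer multiple of 2π/5. -/
/-! Suppose `ρ ^ 5 > 0`. Then `t ρ ^ 3 = -(1 + ρ ^ 5)` is a negative real, so `t > 0` and `ρ ^ 3 < 0`.
But then `ρ ^ 15 = (ρ ^ 5) ^ 3 > 0` while `ρ ^ 15 = (ρ ^ 3) ^ 5 < 0`. An argument in `(2π/5) ℤ`
would force `ρ ^ 5 = ‖ρ‖ ^ 5 > 0`. -/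

open scoped ComplexOrder

namespace Complex

lemma pow_pos_of_arg_eq_int_mul {z : ℂ} (hz : z ≠ 0) {n : ℕ} (hn : n ≠ 0) (k : ℤ)
    (harg : z.arg = k * (2 * Real.pi / n)) : 0 < z ^ n := by
  have hexp : exp (z.arg * I) ^ n = 1 := by
    rw [← exp_nat_mul, harg, ← exp_int_mul_two_pi_mul_I k]
    congr 1
    push_cast
    field_simp
  rw [← norm_mul_exp_arg_mul_I z, mul_pow, hexp, mul_one, ← ofReal_pow]
  exact_mod_cast pow_pos (norm_pos_iff.mpr hz) n

lemma not_pow_five_pos_and_pow_three_neg (z : ℂ) : ¬(0 < z ^ 5 ∧ z ^ 3 < 0) := by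
  rintro ⟨h5, h3⟩
  have hsum : 0 < (z ^ 5) ^ 3 + (-z ^ 3) ^ 5 := add_pos (pow_pos h5 3) (pow_pos (neg_pos.mpr h3) 5)
  exact hsum.ne' (by ring)

lemma not_pow_five_pos_of_root {t : ℝ} (ht : 0 ≤ t) {ρ : ℂ}
    (hρ : ρ ^ 5 + (t : ℂ) * ρ ^ 3 + 1 = 0) : ¬0 < ρ ^ 5 := by
  intro h5
  have hneg : (t : ℂ) * ρ ^ 3 < 0 := by
    rw [show (t : ℂ) * ρ ^ 3 = -(ρ ^ 5 + 1) by linear_combination hρ, neg_lt_zero]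
    exact add_pos h5 one_pos
  have ht0 : 0 < (t : ℂ) := by
    rcases ht.eq_or_lt with rfl | htpos
    · simp at hneg
    · exact_mod_cast htpos
  have h3 : ρ ^ 3 < 0 := by
    simpa [inv_mul_cancel_left₀ ht0.ne'] using mul_neg_of_pos_of_neg (inv_pos.mpr ht0) hneg
  exact not_pow_five_pos_and_pow_three_neg ρ ⟨h5, h3⟩

end Complex

theorem stmt_9 (t : ℝ) (ht : 0 ≤ t) (ρ : ℂ)
    (hρ : ρ ^ 5 + (t : ℂ) * ρ ^ 3 + 1 = 0) :
    ρ ≠ 0 ∧ ¬((ρ ^ 5).im = 0 ∧ 0 < (ρ ^ 5).re) ∧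
    ∀ k : ℤ, ρ.arg ≠ k * (2 * Real.pi / 5) := by
  have hρ0 : ρ ≠ 0 := by
    rintro rfl
    norm_num at hρ
  have hpos : ¬0 < ρ ^ 5 := Complex.not_pow_five_pos_of_root ht hρ
  refine ⟨hρ0, fun ⟨him, hre⟩ => hpos (Complex.pos_iff.mpr ⟨hre, him.symm⟩), fun k hk => hpos ?_⟩
  exact Complex.pow_pos_of_arg_eq_int_mul hρ0 (by norm_num) k (by exact_mod_cast hk)
end

section
/- Let ρ_1, …, ρ_n be distinct complex numbers, f(x) = (x−ρ_1)⋯(x−ρ_n) = x^n + σ_1 x^{n−1} + ⋯ + σ_n, and V the Vandermonde matrix with entries V_{ij} = ρ_i^{j−1}. Then the inverse of V has entries (V^{-1})_{ij} = (ρ_j^{n−i} + σ_1 ρ_j^{n−i−1} + ⋯ + σ_{n−i}) / f'(ρ_j). -/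
open Polynomial

theorem stmt_11 (n : ℕ) (ρ : Fin n → ℂ) (hρ : Function.Injective ρ)
    (f : Polynomial ℂ) (hf : f = ∏ i : Fin n, (X - C (ρ i))) :
    (Matrix.vandermonde ρ)⁻¹ = Matrix.of fun i j : Fin n =>
      (∑ m ∈ Finset.range (n - (i : ℕ)),
          f.coeff (n - m) * ρ j ^ (n - 1 - (i : ℕ) - m)) /
        (derivative f).eval (ρ j) := by
  rcases Nat.eq_zero_or_pos n with hn | hn
  · subst hn; ext i j; exact i.elim0
  have hdeg : f.natDegree = n := by
    rw [hf, Polynomial.natDegree_prod _ _ (fun i _ => X_sub_C_ne_zero (ρ i))]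
    simp
  have hroot : ∀ k : Fin n, f.eval (ρ k) = 0 := by
    intro k
    rw [hf, eval_prod]
    exact Finset.prod_eq_zero (Finset.mem_univ k) (by simp)
  have hsep : f.Separable := by
    rw [hf]; exact Polynomial.separable_prod_X_sub_C_iff.2 hρ
  have hderiv_ne : ∀ k : Fin n, (derivative f).eval (ρ k) ≠ 0 := by
    intro k h
    obtain ⟨a, b, hab⟩ := hsep
    have := congrArg (Polynomial.eval (ρ k)) hab
    simp [hroot k, h] at this
  -- key reindexing identity
  have key : ∀ x y : ℂ,
      (∑ j ∈ Finset.range n, x ^ j *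
        ∑ m ∈ Finset.range (n - j), f.coeff (n - m) * y ^ (n - 1 - j - m))
      = ∑ t ∈ Finset.range (n + 1),
          f.coeff t * ∑ j ∈ Finset.range t, x ^ j * y ^ (t - 1 - j) := by
    intro x y
    have swap : ∑ j ∈ Finset.range n, ∑ m ∈ Finset.range (n - j),
          (x ^ j * (f.coeff (n - m) * y ^ (n - 1 - j - m)))
        = ∑ m ∈ Finset.range n, ∑ j ∈ Finset.range (n - m),
          (x ^ j * (f.coeff (n - m) * y ^ (n - 1 - j - m))) := by
      rw [← Finset.sum_range_diag_flip n
        (fun j m => x ^ j * (f.coeff (n - m) * y ^ (n - 1 - j - m))),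
        ← Finset.sum_range_diag_flip n
        (fun m j => x ^ j * (f.coeff (n - m) * y ^ (n - 1 - j - m)))]
      refine Finset.sum_congr rfl fun m hm => ?_
      rw [← Finset.sum_range_reflect]
      refine Finset.sum_congr rfl fun k hk => ?_
      simp only [Finset.mem_range, Nat.lt_succ_iff] at hk
      have h1 : m + 1 - 1 - k = m - k := by omega
      have h2 : m - (m - k) = k := by omega
      rw [h1, h2]
    calc (∑ j ∈ Finset.range n, x ^ j *
        ∑ m ∈ Finset.range (n - j), f.coeff (n - m) * y ^ (n - 1 - j - m))
        = ∑ j ∈ Finset.range n, ∑ m ∈ Finset.range (n - j),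
            (x ^ j * (f.coeff (n - m) * y ^ (n - 1 - j - m))) := by
          simp [Finset.mul_sum]
      _ = ∑ m ∈ Finset.range n, ∑ j ∈ Finset.range (n - m),
            (x ^ j * (f.coeff (n - m) * y ^ (n - 1 - j - m))) := swap
      _ = ∑ m ∈ Finset.range n,
            f.coeff (n - m) * ∑ j ∈ Finset.range (n - m), x ^ j * y ^ (n - m - 1 - j) := by
          refine Finset.sum_congr rfl fun m hm => ?_
          rw [Finset.mul_sum]
          refine Finset.sum_congr rfl fun j hj => ?_
          have : n - 1 - j - m = n - m - 1 - j := by omega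
          rw [this]; ring
      _ = ∑ m ∈ Finset.range n,
            f.coeff (m + 1) * ∑ j ∈ Finset.range (m + 1), x ^ j * y ^ (m + 1 - 1 - j) := by
          rw [← Finset.sum_range_reflect]
          refine Finset.sum_congr rfl fun m hm => ?_
          simp only [Finset.mem_range] at hm
          have h1 : n - (n - 1 - m) = m + 1 := by omega
          rw [h1]
      _ = ∑ t ∈ Finset.range (n + 1),
            f.coeff t * ∑ j ∈ Finset.range t, x ^ j * y ^ (t - 1 - j) := by
          rw [Finset.sum_range_succ']
          simp
  have hright : Matrix.vandermonde ρ * (Matrix.of fun i j : Fin n =>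
      (∑ m ∈ Finset.range (n - (i : ℕ)),
          f.coeff (n - m) * ρ j ^ (n - 1 - (i : ℕ) - m)) /
        (derivative f).eval (ρ j)) = 1 := by
    ext i k
    rw [Matrix.mul_apply]
    simp only [Matrix.vandermonde, Matrix.of_apply, mul_div_assoc']
    rw [← Finset.sum_div]
    have hsum : ∑ j : Fin n, ρ i ^ (j : ℕ) *
        ∑ m ∈ Finset.range (n - (j : ℕ)), f.coeff (n - m) * ρ k ^ (n - 1 - (j : ℕ) - m)
        = ∑ j ∈ Finset.range n, ρ i ^ j *
          ∑ m ∈ Finset.range (n - j), f.coeff (n - m) * ρ k ^ (n - 1 - j - m) :=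
      Fin.sum_univ_eq_sum_range
        (fun j => ρ i ^ j * ∑ m ∈ Finset.range (n - j),
          f.coeff (n - m) * ρ k ^ (n - 1 - j - m)) n
    rw [hsum, key (ρ i) (ρ k)]
    by_cases hik : i = k
    · subst hik
      have hx : ∀ t : ℕ, (∑ j ∈ Finset.range t, ρ i ^ j * ρ i ^ (t - 1 - j))
          = (t : ℂ) * ρ i ^ (t - 1) := by
        intro t
        have : ∀ j ∈ Finset.range t, ρ i ^ j * ρ i ^ (t - 1 - j) = ρ i ^ (t - 1) := by
          intro j hj
          simp only [Finset.mem_range] at hj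
          rw [← pow_add]
          congr 1
          omega
        rw [Finset.sum_congr rfl this, Finset.sum_const, Finset.card_range, nsmul_eq_mul]
      have hd : (derivative f).eval (ρ i)
          = ∑ t ∈ Finset.range (n + 1), f.coeff t * ((t : ℂ) * ρ i ^ (t - 1)) := by
        rw [Polynomial.eval_eq_sum_range' (lt_of_lt_of_le
          (Polynomial.natDegree_derivative_lt (by omega)) (le_of_eq hdeg))]
        rw [Finset.sum_range_succ']
        simp only [Polynomial.coeff_derivative, Nat.cast_zero, zero_mul, mul_zero, add_zero,
          Nat.cast_add, Nat.cast_one, pow_zero]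
        refine Finset.sum_congr rfl fun j hj => ?_
        have : j + 1 - 1 = j := rfl
        rw [this]
        ring
      rw [Matrix.one_apply_eq]
      rw [Finset.sum_congr rfl fun t _ => by rw [hx t]]
      rw [← hd, div_self (hderiv_ne i)]
    · have hne : ρ i - ρ k ≠ 0 := sub_ne_zero.2 fun h => hik (hρ h)
      have hz : (∑ t ∈ Finset.range (n + 1),
          f.coeff t * ∑ j ∈ Finset.range t, ρ i ^ j * ρ k ^ (t - 1 - j)) * (ρ i - ρ k)
          = 0 := by
        rw [Finset.sum_mul]
        have : ∀ t ∈ Finset.range (n + 1),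
            f.coeff t * (∑ j ∈ Finset.range t, ρ i ^ j * ρ k ^ (t - 1 - j)) * (ρ i - ρ k)
            = f.coeff t * ρ i ^ t - f.coeff t * ρ k ^ t := by
          intro t _
          rw [mul_assoc, geom_sum₂_mul]
          ring
        rw [Finset.sum_congr rfl this, Finset.sum_sub_distrib]
        have hev : ∀ z : ℂ, f.eval z = ∑ t ∈ Finset.range (n + 1), f.coeff t * z ^ t := by
          intro z
          exact Polynomial.eval_eq_sum_range' (by omega) z
        rw [← hev, ← hev, hroot i, hroot k, sub_zero]
      have : (∑ t ∈ Finset.range (n + 1),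
          f.coeff t * ∑ j ∈ Finset.range t, ρ i ^ j * ρ k ^ (t - 1 - j)) = 0 :=
        (mul_eq_zero.1 hz).resolve_right hne
      rw [this, Matrix.one_apply_ne hik, zero_div]
  exact Matrix.inv_eq_right_inv hright
end

section
/- Let z, w ∈ ℂ with |w| ≥ 1. Then max(2|Re(z)|, 2|Re(z·w)|) ≥ |z| · |w|^{-1} · |Im(w)|. -/
/-!
Since `‖z‖² · w = conj z · (z w)`, taking imaginary parts gives
`‖z‖² Im w = Re z · Im (z w) - Im z · Re (z w)`; bounding `|Im (z w)|` by `‖z‖ ‖w‖` and `|Im z|` by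
`‖z‖` yields `‖z‖ |Im w| ≤ |Re z| ‖w‖ + |Re (z w)|`. Dividing by `‖w‖ ≥ 1` leaves
`|Re z| + |Re (z w)|`, which is at most twice the larger of the two.
-/

namespace Complex

theorem normSq_mul_im (z w : ℂ) : normSq z * w.im = z.re * (z * w).im - z.im * (z * w).re := by
  simp only [normSq_apply, mul_re, mul_im]
  ring

theorem norm_mul_abs_im_le (z w : ℂ) : ‖z‖ * |w.im| ≤ |z.re| * ‖w‖ + |(z * w).re| := by
  rcases eq_or_ne z 0 with rfl | hz_ne
  · simp
  have hz : 0 < ‖z‖ := norm_pos_iff.mpr hz_ne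
  refine le_of_mul_le_mul_left ?_ hz
  calc ‖z‖ * (‖z‖ * |w.im|) = |normSq z * w.im| := by
        rw [abs_mul, abs_of_nonneg (normSq_nonneg z), normSq_eq_norm_sq]
        ring
    _ = |z.re * (z * w).im - z.im * (z * w).re| := by rw [normSq_mul_im]
    _ ≤ |z.re| * |(z * w).im| + |z.im| * |(z * w).re| := by
        rw [← abs_mul, ← abs_mul]
        exact abs_sub _ _
    _ ≤ |z.re| * (‖z‖ * ‖w‖) + ‖z‖ * |(z * w).re| := by
        gcongr
        · exact (abs_im_le_norm _).trans_eq (norm_mul _ _)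
        · exact abs_im_le_norm z
    _ = ‖z‖ * (|z.re| * ‖w‖ + |(z * w).re|) := by ring

end Complex

theorem add_le_max_two_mul {a b : ℝ} : a + b ≤ max (2 * a) (2 * b) := by
  rcases le_total a b with h | h
  · exact le_max_of_le_right (by linarith)
  · exact le_max_of_le_left (by linarith)

theorem stmt_13 (z w : ℂ) (hw : 1 ≤ ‖w‖) :
    ‖z‖ * ‖w‖⁻¹ * |w.im| ≤
      max (2 * |z.re|) (2 * |(z * w).re|) := by
  have hw₀ : 0 < ‖w‖ := one_pos.trans_le hw
  calc ‖z‖ * ‖w‖⁻¹ * |w.im| = ‖z‖ * |w.im| / ‖w‖ := by ring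
    _ ≤ (|z.re| * ‖w‖ + |(z * w).re|) / ‖w‖ := by
        gcongr
        exact Complex.norm_mul_abs_im_le z w
    _ = |z.re| + |(z * w).re| / ‖w‖ := by field_simp
    _ ≤ |z.re| + |(z * w).re| := by gcongr; exact div_le_self (abs_nonneg _) hw
    _ ≤ max (2 * |z.re|) (2 * |(z * w).re|) := add_le_max_two_mul
end

section
/- Suppose 0 ≤ t ≤ 1, ρ is a complex root of x^5 + t x^3 + 1, and μ is a fifth root of unity (μ^5 = 1). Then |ρ − μ| ≥ 1/10. -/
/-!
Write `d = ‖ρ - μ‖`, so `‖μ‖ = 1` and `‖ρ‖ ≤ 1 + d`. Since `ρ ^ 5 + 1 = -t ρ ^ 3` and `μ ^ 5 = 1`,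
`2 = -t ρ ^ 3 - (ρ ^ 5 - μ ^ 5)`, hence `2 ≤ (1 + d) ^ 3 + ((1 + d) ^ 5 - 1)`, where `‖ρ ^ 5 - μ ^ 5‖` is
bounded by expanding `ρ = μ + (ρ - μ)` binomially and estimating term by term.
For `d < 1/10` the right-hand side is below `1.331 + 0.611 < 2`.
-/

theorem norm_pow_sub_pow_le_add_pow_sub_pow {R : Type*} [SeminormedRing R] [NormOneClass R]
    (x y : R) (n : ℕ) :
    ‖x ^ n - y ^ n‖ ≤ (‖x - y‖ + ‖y‖) ^ n - ‖y‖ ^ n := by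
  induction n with
  | zero => simp
  | succ n ih =>
    have hx : ‖x‖ ≤ ‖x - y‖ + ‖y‖ := norm_le_norm_sub_add x y
    have hgap : 0 ≤ (‖x - y‖ + ‖y‖) ^ n - ‖y‖ ^ n :=
      sub_nonneg.2 (pow_le_pow_left₀ (norm_nonneg y) (le_add_of_nonneg_left (norm_nonneg _)) n)
    calc ‖x ^ (n + 1) - y ^ (n + 1)‖ = ‖x * (x ^ n - y ^ n) + (x - y) * y ^ n‖ := by
          rw [pow_succ', pow_succ', mul_sub, sub_mul]; abel_nf
      _ ≤ ‖x‖ * ‖x ^ n - y ^ n‖ + ‖x - y‖ * ‖y‖ ^ n :=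
          (norm_add_le _ _).trans
            (add_le_add (norm_mul_le _ _) ((norm_mul_le _ _).trans
              (mul_le_mul_of_nonneg_left (norm_pow_le _ n) (norm_nonneg _))))
      _ ≤ (‖x - y‖ + ‖y‖) * ((‖x - y‖ + ‖y‖) ^ n - ‖y‖ ^ n) + ‖x - y‖ * ‖y‖ ^ n := by
          gcongr
      _ = (‖x - y‖ + ‖y‖) ^ (n + 1) - ‖y‖ ^ (n + 1) := by ring

theorem two_le_of_root_of_pow_five_eq_one {t : ℝ} (ht0 : 0 ≤ t) (ht1 : t ≤ 1) {ρ μ : ℂ}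
    (hρ : ρ ^ 5 + (t : ℂ) * ρ ^ 3 + 1 = 0) (hμ : μ ^ 5 = 1) :
    2 ≤ (‖ρ - μ‖ + 1) ^ 3 + ((‖ρ - μ‖ + 1) ^ 5 - 1) := by
  have hμ1 : ‖μ‖ = 1 := Complex.norm_eq_one_of_pow_eq_one hμ (by norm_num)
  have hρ_le : ‖ρ‖ ≤ ‖ρ - μ‖ + 1 := hμ1 ▸ norm_le_norm_sub_add ρ μ
  have htρ : ‖(t : ℂ) * ρ ^ 3‖ ≤ (‖ρ - μ‖ + 1) ^ 3 := by
    rw [norm_mul, norm_pow, Complex.norm_real, Real.norm_of_nonneg ht0]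
    calc t * ‖ρ‖ ^ 3 ≤ 1 * ‖ρ‖ ^ 3 := by gcongr
      _ ≤ (‖ρ - μ‖ + 1) ^ 3 := by rw [one_mul]; gcongr
  have hpow : ‖ρ ^ 5 - μ ^ 5‖ ≤ (‖ρ - μ‖ + 1) ^ 5 - 1 := by
    simpa [hμ1] using norm_pow_sub_pow_le_add_pow_sub_pow ρ μ 5
  have htwo : (2 : ℂ) = -((t : ℂ) * ρ ^ 3) - (ρ ^ 5 - μ ^ 5) := by
    linear_combination hρ - hμ
  calc (2 : ℝ) = ‖-((t : ℂ) * ρ ^ 3) - (ρ ^ 5 - μ ^ 5)‖ := by rw [← htwo]; norm_num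
    _ ≤ ‖(t : ℂ) * ρ ^ 3‖ + ‖ρ ^ 5 - μ ^ 5‖ := by
      simpa only [norm_neg] using norm_sub_le (-((t : ℂ) * ρ ^ 3)) (ρ ^ 5 - μ ^ 5)
    _ ≤ _ := add_le_add htρ hpow

theorem stmt_15 (t : ℝ) (ht0 : 0 ≤ t) (ht1 : t ≤ 1) (ρ μ : ℂ)
    (hρ : ρ ^ 5 + (t : ℂ) * ρ ^ 3 + 1 = 0) (hμ : μ ^ 5 = 1) :
    1 / 10 ≤ ‖ρ - μ‖ := by
  have h := two_le_of_root_of_pow_five_eq_one ht0 ht1 hρ hμ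
  by_contra! hd
  have hs : ‖ρ - μ‖ + 1 < 11 / 10 := by linarith
  have hs0 : 0 ≤ ‖ρ - μ‖ + 1 := by positivity
  have h3 : (‖ρ - μ‖ + 1) ^ 3 < (11 / 10) ^ 3 := pow_lt_pow_left₀ hs hs0 (by norm_num)
  have h5 : (‖ρ - μ‖ + 1) ^ 5 < (11 / 10) ^ 5 := pow_lt_pow_left₀ hs hs0 (by norm_num)
  norm_num at h3 h5
  linarith
end

section
/- Let t ≥ 0 and let γ be a complex root of x^5 + t x^3 + 1 with 0 < arg(γ) < 2π/5 (i.e. positive imaginary part and argument less than 2π/5). Then |γ − 1| ≥ 0.2. -/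
/-!
Near `1` both `z ^ 3` and `z ^ 5` have positive real part, so for `t ≥ 0` the real part of
`z ^ 5 + t z ^ 3 + 1` is at least `1` on the disc `‖z - 1‖ < 1/5`; hence no root lies there.
Positivity follows from the expansions `Re z³ = a(a² - 3b²)` and
`Re z⁵ = a³(a² - 10b²) + 5ab⁴` with `z = a + bi`, since on that disc `a > 4/5` and `b² < 1/25`.
-/

namespace Complex

lemma re_pow_three (z : ℂ) : (z ^ 3).re = z.re * (z.re ^ 2 - 3 * z.im ^ 2) := by
  simp only [pow_succ, pow_zero, one_mul, mul_re, mul_im]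
  ring

lemma re_pow_five (z : ℂ) :
    (z ^ 5).re = z.re ^ 3 * (z.re ^ 2 - 10 * z.im ^ 2) + 5 * z.re * z.im ^ 4 := by
  simp only [pow_succ, pow_zero, one_mul, mul_re, mul_im]
  ring

lemma re_pow_three_pos {z : ℂ} (hre : 0 < z.re) (him : 3 * z.im ^ 2 < z.re ^ 2) :
    0 < (z ^ 3).re := by
  rw [re_pow_three]
  exact mul_pos hre (by linarith)

lemma re_pow_five_pos {z : ℂ} (hre : 0 < z.re) (him : 10 * z.im ^ 2 < z.re ^ 2) :
    0 < (z ^ 5).re := by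
  rw [re_pow_five]
  have hcross : 0 ≤ 5 * z.re * z.im ^ 4 := by positivity
  nlinarith [mul_pos (pow_pos hre 3) (sub_pos.2 him)]

lemma re_pos_and_im_sq_lt_of_norm_sub_one_lt {z : ℂ} (hz : ‖z - 1‖ < 1 / 5) :
    0 < z.re ∧ 10 * z.im ^ 2 < z.re ^ 2 := by
  have hsq : (z.re - 1) ^ 2 + z.im ^ 2 < 1 / 25 := by
    have h := pow_lt_pow_left₀ hz (norm_nonneg _) two_ne_zero
    rw [Complex.sq_norm, normSq_apply] at h
    simp only [sub_re, sub_im, one_re, one_im, sub_zero] at h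
    nlinarith
  have hre : 4 / 5 < z.re := by nlinarith [sq_nonneg z.im]
  exact ⟨by linarith, by nlinarith [sq_nonneg (z.re - 1)]⟩

end Complex

theorem stmt_16_general (t : ℝ) (ht : 0 ≤ t) (γ : ℂ)
    (hγ : γ ^ 5 + (t : ℂ) * γ ^ 3 + 1 = 0) :
    0.2 ≤ ‖γ - 1‖ := by
  by_contra! hnear
  obtain ⟨hre, him⟩ :=
    Complex.re_pos_and_im_sq_lt_of_norm_sub_one_lt (z := γ) (by norm_num at hnear; exact hnear)
  have hfive := Complex.re_pow_five_pos hre him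
  have hthree := Complex.re_pow_three_pos hre (by nlinarith [sq_nonneg γ.im])
  have hre_eq : (γ ^ 5).re + t * (γ ^ 3).re + 1 = 0 := by
    simpa using congrArg Complex.re hγ
  linarith [mul_nonneg ht hthree.le]

theorem stmt_16 (t : ℝ) (ht : 0 ≤ t) (γ : ℂ)
    (hγ : γ ^ 5 + (t : ℂ) * γ ^ 3 + 1 = 0)
    (harg0 : 0 < γ.arg) (harg1 : γ.arg < 2 * Real.pi / 5) :
    0.2 ≤ ‖γ - 1‖ :=
  stmt_16_general t ht γ hγ
end
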